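/- Let μ : P(M) → P(M′) be a map between projective lines over rings R and R′ that sends every harmonic quadruple to a harmonic quadruple, and assume 2 ∈ R* so that every pair of distant points extends to a harmonic quadruple. Then μ is distant-preserving: p₀ distant from p₁ implies μ(p₀) distant from μ(p₁). -/

import Mathlib

/-!
A distant pair `(Ru, Rv)` of points is the pair `(Rb₀, Rb₁)` for the basis `b = (u, v)`
of `M`, hence the first two entries of the harmonic quadruple
`(Rb₀, Rb₁, R(b₀ + b₁), R(b₀ - b₁))`. Its image under `μ` is harmonic, and the first two
entries of any harmonic quadruple are spanned by the two vectors of a basis, so they are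
complementary.
-/

/-- A point of the projective line over `M`. -/
def IsPoint (R M : Type*) [Ring R] [AddCommGroup M] [Module R M]
    (p : Submodule R M) : Prop :=
  ∃ g : Module.Basis (Fin 2) R M, p = Submodule.span R {g 0}

/-- Harmonic quadruple of points of the projective line over `M`. -/
def Harm (R M : Type*) [Ring R] [AddCommGroup M] [Module R M]
    (p₀ p₁ p₂ p₃ : Submodule R M) : Prop :=
  ∃ g : Module.Basis (Fin 2) R M,
    p₀ = Submodule.span R {g 0} ∧ p₁ = Submodule.span R {g 1} ∧
    p₂ = Submodule.span R {g 0 + g 1} ∧ p₃ = Submodule.span R {g 0 - g 1}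

section

variable {R M : Type*} [Ring R] [AddCommGroup M] [Module R M]

open Submodule

theorem Module.Basis.isCompl_span_zero_span_one (g : Module.Basis (Fin 2) R M) :
    IsCompl (span R {g 0}) (span R {g 1}) := by
  simpa only [Set.image_singleton] using
    g.linearIndependent.isCompl_span_image g.span_eq (s := {0}) (t := {1}) <| by
      rw [show ({1} : Set (Fin 2)) = {0}ᶜ by ext i; fin_cases i <;> simp]
      exact isCompl_compl

theorem LinearIndependent.pair_of_disjoint_span {u v : M}
    (hu : Function.Injective fun r : R ↦ r • u) (hv : Function.Injective fun r : R ↦ r • v)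
    (huv : Disjoint (span R {u}) (span R {v})) : LinearIndependent R ![u, v] := by
  refine LinearIndependent.pair_iff.mpr fun s t hst ↦ ?_
  have hsu : s • u = (-t) • v := by rw [neg_smul]; exact eq_neg_of_add_eq_zero_left hst
  have hsu_zero : s • u = 0 := disjoint_def.mp huv _
    (smul_mem _ _ (mem_span_singleton_self u)) (hsu ▸ smul_mem _ _ (mem_span_singleton_self v))
  have hs : s = 0 := hu (by simpa using hsu_zero)
  subst hs
  exact ⟨rfl, hv (by simpa using hst)⟩

theorem Module.Basis.exists_fin_two_of_isCompl_span {u v : M}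
    (hu : Function.Injective fun r : R ↦ r • u) (hv : Function.Injective fun r : R ↦ r • v)
    (huv : IsCompl (span R {u}) (span R {v})) :
    ∃ b : Module.Basis (Fin 2) R M, b 0 = u ∧ b 1 = v := by
  have hspan : ⊤ ≤ span R (Set.range ![u, v]) := by
    rw [Matrix.range_cons_cons_empty, Set.insert_eq, span_union, huv.sup_eq_top]
  refine ⟨.mk (.pair_of_disjoint_span hu hv huv.disjoint) hspan, ?_, ?_⟩ <;> simp

theorem Harm.isCompl {p₀ p₁ p₂ p₃ : Submodule R M} (h : Harm R M p₀ p₁ p₂ p₃) :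
    IsCompl p₀ p₁ := by
  obtain ⟨g, rfl, rfl, -, -⟩ := h
  exact g.isCompl_span_zero_span_one

theorem exists_harm_of_isCompl {p₀ p₁ : Submodule R M} (hp₀ : IsPoint R M p₀)
    (hp₁ : IsPoint R M p₁) (h : IsCompl p₀ p₁) : ∃ p₂ p₃, Harm R M p₀ p₁ p₂ p₃ := by
  obtain ⟨g, rfl⟩ := hp₀
  obtain ⟨g', rfl⟩ := hp₁
  obtain ⟨b, hb₀, hb₁⟩ := Module.Basis.exists_fin_two_of_isCompl_span
    (g.linearIndependent.smul_left_injective 0) (g'.linearIndependent.smul_left_injective 0) h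
  exact ⟨_, _, b, by rw [hb₀], by rw [hb₁], rfl, rfl⟩

end

theorem harmonicity_preserver_is_distant_preserving_general
    (R M R' M' : Type*) [Ring R] [AddCommGroup M] [Module R M]
    [Ring R'] [AddCommGroup M'] [Module R' M']
    (μ : Submodule R M → Submodule R' M')
    (hμ : ∀ p₀ p₁ p₂ p₃ : Submodule R M,
      Harm R M p₀ p₁ p₂ p₃ → Harm R' M' (μ p₀) (μ p₁) (μ p₂) (μ p₃)) :
    ∀ p₀ p₁ : Submodule R M, IsPoint R M p₀ → IsPoint R M p₁ →
      IsCompl p₀ p₁ → IsCompl (μ p₀) (μ p₁) := by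
  intro p₀ p₁ hp₀ hp₁ h
  obtain ⟨p₂, p₃, hharm⟩ := exists_harm_of_isCompl hp₀ hp₁ h
  exact (hμ _ _ _ _ hharm).isCompl

/-- A harmonicity preserver between projective lines is distant preserving
(assuming `2 ∈ R*`, so that any pair of distant points extends to a harmonic
quadruple). -/
theorem harmonicity_preserver_is_distant_preserving
    (R M R' M' : Type*) [Ring R] [AddCommGroup M] [Module R M]
    [Ring R'] [AddCommGroup M'] [Module R' M']
    (h2 : IsUnit (2 : R))
    (μ : Submodule R M → Submodule R' M')
    (hμ : ∀ p₀ p₁ p₂ p₃ : Submodule R M,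
      Harm R M p₀ p₁ p₂ p₃ → Harm R' M' (μ p₀) (μ p₁) (μ p₂) (μ p₃)) :
    ∀ p₀ p₁ : Submodule R M, IsPoint R M p₀ → IsPoint R M p₁ →
      IsCompl p₀ p₁ → IsCompl (μ p₀) (μ p₁) :=
  harmonicity_preserver_is_distant_preserving_general R M R' M' μ hμ
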